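/- Let Δ : ℕ^(2) ↠ [k] be a surjective colouring with k ≥ 2, and suppose l ∈ F_Δ with l < k. Then there exists l' ∈ F_Δ with l + 1 ≤ l' ≤ 2l. -/

import Mathlib

/-- The colour of the unordered edge `{x, y}` (only values on distinct pairs matter). -/
def edgeCol (Δ : ℕ → ℕ → ℕ) (x y : ℕ) : ℕ := Δ (min x y) (max x y)

/-- `colourSet Δ X` is the set of colours attained by `Δ` on edges with both endpoints in `X`. -/
def colourSet (Δ : ℕ → ℕ → ℕ) (X : Set ℕ) : Set ℕ :=
  {c | ∃ x ∈ X, ∃ y ∈ X, x ≠ y ∧ edgeCol Δ x y = c}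

/-- `Δ` is a surjective colouring `ℕ^(2) ↠ [k]` of the edges of the complete
graph on `ℕ` with colour set `[k] = {1, …, k}`. -/
def IsColouring (Δ : ℕ → ℕ → ℕ) (k : ℕ) : Prop :=
  (∀ x y : ℕ, x ≠ y → edgeCol Δ x y ∈ Finset.Icc 1 k) ∧
  (∀ c ∈ Finset.Icc 1 k, ∃ x y : ℕ, x ≠ y ∧ edgeCol Δ x y = c)

/-- `F_Δ`: the set of `m ∈ [k]` for which some infinite `X ⊆ ℕ` is exactly `m`-coloured. -/
def FSet (Δ : ℕ → ℕ → ℕ) (k : ℕ) : Set ℕ :=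
  {m | m ∈ Finset.Icc 1 k ∧ ∃ X : Set ℕ, X.Infinite ∧ (colourSet Δ X).ncard = m}

/-!
Suppose no `l' ∈ [l + 1, 2l]` lies in `F_Δ`. Then an infinite set with at most `2l` colours has at
most `l`; in particular an infinite set whose colours lie in `P ∪ Q ∪ {c}`, where `P` and `Q` have
at most `l` colours each and share one, has at most `l` colours. Let `X` be exactly `l`-coloured,
let `ab` be an edge whose colour is missing from `X`, and let `Y ⊆ X` be infinite with `a` and `b`
each joined to `Y` in a single colour. Adding to `Y ∪ {a}` and to `Y ∪ {b}`, one at a time, a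
finite set `S ⊆ X` realising all colours of `X` keeps the colour count at most `l`, hence so does
their union `Y ∪ S ∪ {a, b}`, which however sees the `l` colours of `X` and the colour of `ab`.
-/

lemma edgeCol_comm (Δ : ℕ → ℕ → ℕ) (x y : ℕ) : edgeCol Δ x y = edgeCol Δ y x := by
  simp [edgeCol, min_comm, max_comm]

section colourSet

variable {Δ : ℕ → ℕ → ℕ}

lemma edgeCol_mem_colourSet {S : Set ℕ} {x y : ℕ} (hx : x ∈ S) (hy : y ∈ S) (hxy : x ≠ y) :
    edgeCol Δ x y ∈ colourSet Δ S :=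
  ⟨x, hx, y, hy, hxy, rfl⟩

lemma colourSet_mono {S T : Set ℕ} (h : S ⊆ T) : colourSet Δ S ⊆ colourSet Δ T := by
  rintro c ⟨x, hx, y, hy, hxy, rfl⟩
  exact edgeCol_mem_colourSet (h hx) (h hy) hxy

lemma colourSet_nonempty {S : Set ℕ} (hS : S.Nontrivial) : (colourSet Δ S).Nonempty := by
  obtain ⟨x, hx, y, hy, hxy⟩ := hS
  exact ⟨_, edgeCol_mem_colourSet hx hy hxy⟩

lemma colourSet_insert_subset (w : ℕ) (Z : Set ℕ) :
    colourSet Δ (insert w Z) ⊆ colourSet Δ Z ∪ edgeCol Δ w '' (Z \ {w}) := by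
  rintro c ⟨x, hx, y, hy, hxy, rfl⟩
  rcases hx with rfl | hx <;> rcases hy with rfl | hy
  · exact absurd rfl hxy
  · exact Or.inr ⟨y, ⟨hy, hxy.symm⟩, rfl⟩
  · exact Or.inr ⟨x, ⟨hx, hxy⟩, edgeCol_comm Δ y x⟩
  · exact Or.inl (edgeCol_mem_colourSet hx hy hxy)

lemma colourSet_insert_subset_of_edgeCol_eq {v d : ℕ} {Y : Set ℕ}
    (h : ∀ x ∈ Y, edgeCol Δ v x = d) : colourSet Δ (insert v Y) ⊆ insert d (colourSet Δ Y) := by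
  intro c hc
  rcases colourSet_insert_subset v Y hc with hc | ⟨x, hx, rfl⟩
  · exact Or.inr hc
  · exact Or.inl (h x hx.1)

lemma colourSet_insert_insert_subset (a b : ℕ) (Z : Set ℕ) :
    colourSet Δ (insert a (insert b Z)) ⊆
      insert (edgeCol Δ a b) (colourSet Δ (insert a Z) ∪ colourSet Δ (insert b Z)) := by
  intro c hc
  rcases colourSet_insert_subset a _ hc with hc | ⟨x, ⟨rfl | hx, hxa⟩, rfl⟩
  · exact Or.inr (Or.inr hc)
  · exact Or.inl rfl
  · exact Or.inr (Or.inl (edgeCol_mem_colourSet (Set.mem_insert a Z) (Or.inr hx) (Ne.symm hxa)))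

end colourSet

section IsColouring

variable {Δ : ℕ → ℕ → ℕ} {k : ℕ}

lemma IsColouring.colourSet_subset (hΔ : IsColouring Δ k) (S : Set ℕ) :
    colourSet Δ S ⊆ ↑(Finset.Icc 1 k) := by
  rintro c ⟨x, -, y, -, hxy, rfl⟩
  exact hΔ.1 x y hxy

lemma IsColouring.colourSet_finite (hΔ : IsColouring Δ k) (S : Set ℕ) :
    (colourSet Δ S).Finite :=
  (Finset.Icc 1 k).finite_toSet.subset (hΔ.colourSet_subset S)

lemma IsColouring.ncard_colourSet_le (hΔ : IsColouring Δ k) (S : Set ℕ) :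
    (colourSet Δ S).ncard ≤ k := by
  simpa using Set.ncard_le_ncard (hΔ.colourSet_subset S)

lemma IsColouring.exists_not_mem_colourSet (hΔ : IsColouring Δ k) {X : Set ℕ}
    (hX : (colourSet Δ X).ncard < k) : ∃ c ∈ Finset.Icc 1 k, c ∉ colourSet Δ X := by
  by_contra! h
  have := Set.ncard_le_ncard (s := ↑(Finset.Icc 1 k)) (fun c hc => h c hc) (hΔ.colourSet_finite X)
  simp at this
  omega

lemma IsColouring.exists_infinite_edgeCol_eq (hΔ : IsColouring Δ k) {Y : Set ℕ}
    (hY : Y.Infinite) (v : ℕ) : ∃ Y' ⊆ Y, Y'.Infinite ∧ ∃ d, ∀ x ∈ Y', edgeCol Δ v x = d := by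
  by_contra! h
  have hfin : (⋃ d ∈ Finset.Icc 1 k, {x ∈ Y \ {v} | edgeCol Δ v x = d}).Finite :=
    (Finset.Icc 1 k).finite_toSet.biUnion fun d _ =>
      Set.not_infinite.mp fun hd =>
        let ⟨_, hx, hxd⟩ := h _ (fun x hx => hx.1.1) hd d
        hxd hx.2
  refine (hY.sdiff (Set.finite_singleton v)) (hfin.subset fun x hx => ?_)
  exact Set.mem_biUnion (hΔ.1 v x (Ne.symm hx.2)) ⟨hx, rfl⟩

end IsColouring

lemma exists_finite_subset_colourSet_subset {Δ : ℕ → ℕ → ℕ} {X : Set ℕ}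
    (hX : (colourSet Δ X).Finite) : ∃ S ⊆ X, S.Finite ∧ colourSet Δ X ⊆ colourSet Δ S := by
  have hwit : ∀ c ∈ colourSet Δ X, ∃ x ∈ X, ∃ y ∈ X, x ≠ y ∧ edgeCol Δ x y = c := fun _ hc => hc
  choose! x hx y hy hxy hc using hwit
  refine ⟨x '' colourSet Δ X ∪ y '' colourSet Δ X, ?_, (hX.image x).union (hX.image y), ?_⟩
  · rintro _ (⟨c, hc, rfl⟩ | ⟨c, hc, rfl⟩)
    exacts [hx c hc, hy c hc]
  · intro c hcX
    rw [← hc c hcX]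
    exact edgeCol_mem_colourSet (Or.inl ⟨c, hcX, rfl⟩) (Or.inr ⟨c, hcX, rfl⟩) (hxy c hcX)

def ColourGap (Δ : ℕ → ℕ → ℕ) (l : ℕ) : Prop :=
  ∀ Y : Set ℕ, Y.Infinite → (colourSet Δ Y).ncard ≤ 2 * l → (colourSet Δ Y).ncard ≤ l

lemma colourGap_of_forall_mem_FSet {Δ : ℕ → ℕ → ℕ} {k l : ℕ} (hΔ : IsColouring Δ k)
    (h : ∀ l' ∈ FSet Δ k, l + 1 ≤ l' → 2 * l < l') : ColourGap Δ l := by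
  intro Y hY h2l
  by_contra! hlt
  exact (h _ ⟨Finset.mem_Icc.2 ⟨by omega, hΔ.ncard_colourSet_le Y⟩, Y, hY, rfl⟩ hlt).not_ge h2l

namespace ColourGap

variable {Δ : ℕ → ℕ → ℕ} {l : ℕ}

lemma ncard_le (hgap : ColourGap Δ l) {Z P Q : Set ℕ} {c : ℕ} (hZ : Z.Infinite)
    (hP : P.Finite) (hQ : Q.Finite) (hPl : P.ncard ≤ l) (hQl : Q.ncard ≤ l)
    (hPQ : (P ∩ Q).Nonempty) (hZPQ : colourSet Δ Z ⊆ insert c (P ∪ Q)) :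
    (colourSet Δ Z).ncard ≤ l := by
  refine hgap Z hZ ?_
  have hunion := Set.ncard_union_add_ncard_inter P Q hP hQ
  have hinter := (Set.ncard_pos (hP.inter_of_left Q)).2 hPQ
  calc (colourSet Δ Z).ncard ≤ (insert c (P ∪ Q)).ncard :=
        Set.ncard_le_ncard hZPQ ((hP.union hQ).insert c)
    _ ≤ (P ∪ Q).ncard + 1 := Set.ncard_insert_le _ _
    _ ≤ 2 * l := by omega

/-- Vertices of `X` can be added one at a time to `insert v Y`: each new vertex `w` contributes
only colours of `X` and the single colour `edgeCol Δ w v`, and both the colour sets of `X` and of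
the current set contain those of the infinite set `Y`. -/
lemma ncard_colourSet_insert_union_le {k : ℕ} (hgap : ColourGap Δ l) (hΔ : IsColouring Δ k)
    {X Y S : Set ℕ} {v : ℕ} (hXl : (colourSet Δ X).ncard ≤ l) (hYX : Y ⊆ X) (hY : Y.Infinite)
    (hv : (colourSet Δ (insert v Y)).ncard ≤ l) (hSX : S ⊆ X) (hS : S.Finite) :
    (colourSet Δ (insert v (Y ∪ S))).ncard ≤ l := by
  refine Set.Finite.induction_on_subset S hS
    (motive := fun t _ => (colourSet Δ (insert v (Y ∪ t))).ncard ≤ l) (by simpa using hv) ?_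
  intro w t hwS hts _ ih
  have hYt : Y ⊆ insert v (Y ∪ t) := Set.subset_union_left.trans (Set.subset_insert _ _)
  refine hgap.ncard_le (c := edgeCol Δ w v)
    (hY.mono (Set.subset_union_left.trans (Set.subset_insert _ _)))
    (hΔ.colourSet_finite X) (hΔ.colourSet_finite _) hXl ih ?_ ?_
  · obtain ⟨c, hc⟩ := colourSet_nonempty (Δ := Δ) hY.nontrivial
    exact ⟨c, colourSet_mono hYX hc, colourSet_mono hYt hc⟩
  · rw [Set.union_insert, Set.insert_comm]
    intro c hc
    rcases colourSet_insert_subset w _ hc with hc | ⟨u, ⟨rfl | hu, huw⟩, rfl⟩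
    · exact Or.inr (Or.inr hc)
    · exact Or.inl rfl
    · have huX : u ∈ X := hu.elim (fun h => hYX h) (fun h => hSX (hts h))
      exact Or.inr (Or.inl (edgeCol_mem_colourSet (hSX hwS) huX fun h => huw h.symm))

end ColourGap

theorem erickson_step_general (k : ℕ) (Δ : ℕ → ℕ → ℕ) (hΔ : IsColouring Δ k)
    (l : ℕ) (hl : l ∈ FSet Δ k) (hlk : l < k) :
    ∃ l' ∈ FSet Δ k, l + 1 ≤ l' ∧ l' ≤ 2 * l := by
  by_contra! hDone
  have hgap := colourGap_of_forall_mem_FSet hΔ hDone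
  obtain ⟨-, X, hX, hXl⟩ := hl
  have hXfin := hΔ.colourSet_finite X
  obtain ⟨c, hc, hcX⟩ := hΔ.exists_not_mem_colourSet (hXl ▸ hlk)
  obtain ⟨a, b, hab, rfl⟩ := hΔ.2 c hc
  obtain ⟨Xa, hXaX, hXa, d, hd⟩ := hΔ.exists_infinite_edgeCol_eq hX a
  obtain ⟨Y, hYXa, hY, e, he⟩ := hΔ.exists_infinite_edgeCol_eq hXa b
  have hYX := hYXa.trans hXaX
  obtain ⟨S, hSX, hS, hXS⟩ := exists_finite_subset_colourSet_subset hXfin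
  have hstar {v f : ℕ} (hf : ∀ x ∈ Y, edgeCol Δ v x = f) :
      (colourSet Δ (insert v (Y ∪ S))).ncard ≤ l := by
    refine hgap.ncard_colourSet_insert_union_le hΔ hXl.le hYX hY ?_ hSX hS
    refine hgap.ncard_le (c := f) (hY.mono (Set.subset_insert _ _)) hXfin hXfin hXl.le hXl.le
      (by rw [Set.inter_self]; exact colourSet_nonempty hX.nontrivial) ?_
    exact (colourSet_insert_subset_of_edgeCol_eq hf).trans
      (Set.insert_subset_insert ((colourSet_mono hYX).trans Set.subset_union_left))
  have hYZ {v : ℕ} : Y ⊆ insert v (Y ∪ S) := Set.subset_union_left.trans (Set.subset_insert _ _)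
  have hpair : (colourSet Δ (insert a (insert b (Y ∪ S)))).ncard ≤ l := by
    refine hgap.ncard_le (hY.mono (hYZ.trans (Set.subset_insert _ _))) (hΔ.colourSet_finite _)
      (hΔ.colourSet_finite _) (hstar fun x hx => hd x (hYXa hx)) (hstar he) ?_
      (colourSet_insert_insert_subset a b _)
    obtain ⟨c, hc⟩ := colourSet_nonempty (Δ := Δ) hY.nontrivial
    exact ⟨c, colourSet_mono hYZ hc, colourSet_mono hYZ hc⟩
  have hcover : insert (edgeCol Δ a b) (colourSet Δ X) ⊆
      colourSet Δ (insert a (insert b (Y ∪ S))) :=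
    Set.insert_subset (edgeCol_mem_colourSet (Set.mem_insert _ _)
      (Set.mem_insert_of_mem _ (Set.mem_insert _ _)) hab)
      (hXS.trans (colourSet_mono (Set.subset_union_right.trans
        ((Set.subset_insert _ _).trans (Set.subset_insert _ _)))))
  have := Set.ncard_le_ncard hcover (hΔ.colourSet_finite _)
  rw [Set.ncard_insert_of_notMem hcX hXfin] at this
  omega

/-- **Lemma 4.** If `l ∈ F_Δ` and `l < k`, then there is `l' ∈ F_Δ` with `l + 1 ≤ l' ≤ 2l`. -/
theorem erickson_step (k : ℕ) (hk : 2 ≤ k) (Δ : ℕ → ℕ → ℕ) (hΔ : IsColouring Δ k)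
    (l : ℕ) (hl : l ∈ FSet Δ k) (hlk : l < k) :
    ∃ l' ∈ FSet Δ k, l + 1 ≤ l' ∧ l' ≤ 2 * l :=
  erickson_step_general k Δ hΔ l hl hlk
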